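/- Given a vertex $v \in \mathbb{R}_{>0}^m$ of a polyblock containing the normal set $\mathcal{Y}$, and its projection $\beta v$ onto the upper boundary of $\mathcal{Y}$ with $\beta \in [0,1)$, the new vertices $v^{(i)} = v - (1-\beta) v_i e_i$ (for $i = 1,\dots,m$, where $e_i$ is the $i$-th standard basis vector) satisfy: the polyblock generated by replacing $v$ with $\{v^{(1)},\dots,v^{(m)}\}$ still contains $\mathcal{Y}$ and is strictly contained in the previous polyblock. -/
import Mathlib


/-- Polyblock refinement: replacing a (proper) vertex `v` of a polyblock containing
the normal set `𝒴` by the vertices `v⁽ⁱ⁾ = v - (1-β) vᵢ eᵢ` (i.e. coordinate `i`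
lowered to `β vᵢ`, where `β v` is the projection of `v` on the upper boundary of `𝒴`)
yields a polyblock that still contains `𝒴` and is strictly contained in the old one. -/
theorem polyblock_refinement (m : ℕ) (hm : 0 < m)
    (𝒴 : Set (Fin m → ℝ)) (h𝒴c : IsCompact 𝒴)
    (h𝒴pos : ∀ y ∈ 𝒴, ∀ i, 0 ≤ y i)
    (hnormal : ∀ y' ∈ 𝒴, ∀ y : Fin m → ℝ, (∀ i, 0 ≤ y i) → y ≤ y' → y ∈ 𝒴)
    (T : Set (Fin m → ℝ)) (hcover : 𝒴 ⊆ ⋃ w ∈ T, Set.Icc 0 w)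
    (v : Fin m → ℝ) (hvT : v ∈ T) (hv : ∀ i, 0 < v i)
    (hvproper : ∀ w ∈ T, v ≤ w → w = v)
    (β : ℝ) (hβ : β ∈ Set.Ico (0 : ℝ) 1)
    (hproj : β • v ∈ 𝒴) (hproj' : ∀ β' : ℝ, β < β' → β' • v ∉ 𝒴) :
    𝒴 ⊆ (⋃ w ∈ (T \ {v}) ∪ Set.range (fun i => Function.update v i (β * v i)),
          Set.Icc 0 w) ∧
    (⋃ w ∈ (T \ {v}) ∪ Set.range (fun i => Function.update v i (β * v i)),
        Set.Icc 0 w) ⊂ ⋃ w ∈ T, Set.Icc 0 w := by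
  obtain ⟨hβ0, hβ1⟩ := hβ
  constructor
  · intro y hy
    have h := hcover hy
    simp only [Set.mem_iUnion, Set.mem_Icc] at h
    obtain ⟨w, hwT, hy0, hyw⟩ := h
    simp only [Set.mem_iUnion, Set.mem_Icc]
    by_cases hwv : w = v
    · subst hwv
      -- find a coordinate with y i ≤ β * v i
      have hex : ∃ i, y i ≤ β * w i := by
        by_contra hcon
        push_neg at hcon
        obtain ⟨i₀, -, hmin⟩ := Finset.exists_min_image Finset.univ
          (fun i => y i / w i) ⟨⟨0, hm⟩, Finset.mem_univ _⟩
        set β' : ℝ := y i₀ / w i₀ with hβ'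
        have hββ' : β < β' := (lt_div_iff₀ (hv i₀)).mpr (hcon i₀)
        refine hproj' β' hββ' ?_
        refine hnormal y hy _ (fun j => ?_) (fun j => ?_)
        · have : 0 ≤ β' := div_nonneg (le_trans (le_refl 0) (hy0 i₀)) (hv i₀).le
          exact mul_nonneg this (hv j).le
        · have h1 : β' ≤ y j / w j := hmin j (Finset.mem_univ j)
          calc β' * w j ≤ (y j / w j) * w j :=
                mul_le_mul_of_nonneg_right h1 (hv j).le
            _ = y j := div_mul_cancel₀ _ (hv j).ne'
      obtain ⟨i, hi⟩ := hex
      refine ⟨Function.update w i (β * w i), Or.inr ⟨i, rfl⟩, hy0, fun j => ?_⟩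
      rw [Function.update_apply]
      split_ifs with hj
      · subst hj; exact hi
      · exact hyw j
    · exact ⟨w, Or.inl ⟨hwT, hwv⟩, hy0, hyw⟩
  · constructor
    · intro x hx
      simp only [Set.mem_iUnion, Set.mem_Icc] at hx ⊢
      obtain ⟨w, hw, hx0, hxw⟩ := hx
      rcases hw with ⟨hwT, -⟩ | ⟨i, rfl⟩
      · exact ⟨w, hwT, hx0, hxw⟩
      · refine ⟨v, hvT, hx0, fun j => (hxw j).trans ?_⟩
        simp only [Function.update_apply]
        split_ifs with hj
        · subst hj
          calc β * v j ≤ 1 * v j := mul_le_mul_of_nonneg_right hβ1.le (hv j).le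
            _ = v j := one_mul _
        · exact le_refl _
    · intro hsub
      have hvmem : v ∈ ⋃ w ∈ T, Set.Icc 0 w := by
        simp only [Set.mem_iUnion, Set.mem_Icc]
        exact ⟨v, hvT, fun i => (hv i).le, le_refl _⟩
      have := hsub hvmem
      simp only [Set.mem_iUnion, Set.mem_Icc] at this
      obtain ⟨w, hw, -, hvw⟩ := this
      rcases hw with ⟨hwT, hwne⟩ | ⟨i, rfl⟩
      · exact hwne (hvproper w hwT hvw)
      · have := hvw i
        simp only [Function.update_self] at this
        nlinarith [hv i]
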